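/- Let $\mathcal{L} = \{\ell_1, \dots, \ell_{n+1}\}$ be a totally symmetric arrangement of $n+1$ distinct lines in $\mathbb{C}^n$. Then $\mathcal{L}$ is isomorphic to the simplex arrangement: there is a basis $e_1,\dots,e_n$ of $\mathbb{C}^n$ such that $\ell_i = \mathrm{span}(e_i)$ for $1 \leq i \leq n$ and $\ell_{n+1} = \mathrm{span}(e_1 + \cdots + e_n)$. -/

import Mathlib

open Submodule Set Module

lemma span_range_eq_of_smul {ι M : Type*} [AddCommGroup M] [Module ℂ M]
    {w u : ι → M} (h : ∀ i, ∃ c : ℂ, c ≠ 0 ∧ w i = c • u i) :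
    span ℂ (range w) = span ℂ (range u) := by
  apply le_antisymm <;> rw [span_le] <;> rintro x ⟨i, rfl⟩
  · obtain ⟨c, hc, hw⟩ := h i
    rw [hw]; exact smul_mem _ _ (subset_span ⟨i, rfl⟩)
  · obtain ⟨c, hc, hw⟩ := h i
    have : u i = c⁻¹ • w i := by rw [hw, smul_smul, inv_mul_cancel₀ hc, one_smul]
    rw [this]; exact smul_mem _ _ (subset_span ⟨i, rfl⟩)

open Submodule Set Module

lemma exists_perm_comp {α : Type*} [Fintype α] [DecidableEq α] {k : ℕ}
    {f g : Fin k → α} (hf : Function.Injective f) (hg : Function.Injective g) :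
    ∃ σ : Equiv.Perm α, ∀ i, σ (f i) = g i := by
  classical
  have hcf : Fintype.card {a // ¬ a ∈ range f} = Fintype.card α - k := by
    rw [Fintype.card_subtype_compl]
    congr 1
    rw [show Fintype.card { x // x ∈ range f } = Fintype.card ↑(range f) from Fintype.card_congr (Equiv.refl _)]
    rw [Set.card_range_of_injective hf, Fintype.card_fin]
  have hcg : Fintype.card {a // ¬ a ∈ range g} = Fintype.card α - k := by
    rw [Fintype.card_subtype_compl]
    congr 1
    rw [show Fintype.card { x // x ∈ range g } = Fintype.card ↑(range g) from Fintype.card_congr (Equiv.refl _)]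
    rw [Set.card_range_of_injective hg, Fintype.card_fin]
  let eC : {a // ¬ a ∈ range f} ≃ {a // ¬ a ∈ range g} :=
    Fintype.equivOfCardEq (hcf.trans hcg.symm)
  let e1 : Fin k ≃ {a // a ∈ range f} := Equiv.ofInjective f hf
  let e2 : Fin k ≃ {a // a ∈ range g} := Equiv.ofInjective g hg
  let σ : Equiv.Perm α :=
    (Equiv.sumCompl (· ∈ range f)).symm.trans
      (((e1.symm.trans e2).sumCongr eC).trans (Equiv.sumCompl (· ∈ range g)))
  refine ⟨σ, fun i => ?_⟩
  have h1 : (Equiv.sumCompl (· ∈ range f)).symm (f i) = Sum.inl ⟨f i, ⟨i, rfl⟩⟩ :=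
    Equiv.sumCompl_symm_apply_of_pos ⟨i, rfl⟩
  have h2 : e1.symm ⟨f i, ⟨i, rfl⟩⟩ = i := by
    apply e1.injective; simp [e1, Equiv.apply_ofInjective_symm]
  simp only [σ, Equiv.trans_apply, h1, Equiv.sumCongr_apply, Sum.map_inl,
    Equiv.sumCompl_apply_inl, h2]
  simp [e2, Equiv.ofInjective_apply]

lemma rank_invariant {n : ℕ} {v : Fin (n+1) → (Fin n → ℂ)}
    (hsym : ∀ σ : Equiv.Perm (Fin (n+1)), ∃ P : (Fin n → ℂ) ≃ₗ[ℂ] (Fin n → ℂ),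
       ∀ i, ∃ c : ℂ, c ≠ 0 ∧ P (v i) = c • v (σ i))
    {k : ℕ} {f g : Fin k → Fin (n+1)} (hf : Function.Injective f)
    (hg : Function.Injective g) :
    finrank ℂ (↥(span ℂ (range (v ∘ f)))) = finrank ℂ (↥(span ℂ (range (v ∘ g)))) := by
  obtain ⟨σ, hσ⟩ := exists_perm_comp hf hg
  obtain ⟨P, hP⟩ := hsym σ
  have hmap : (span ℂ (range (v ∘ f))).map P.toLinearMap = span ℂ (range (v ∘ g)) := by
    rw [Submodule.map_span, ← Set.range_comp]
    apply span_range_eq_of_smul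
    intro i
    obtain ⟨c, hc, h⟩ := hP (f i)
    exact ⟨c, hc, by simpa [hσ i] using h⟩
  rw [← hmap, LinearEquiv.finrank_map_eq]

lemma key_uniform {n : ℕ} {v : Fin (n+1) → (Fin n → ℂ)}
    (hvinj : Function.Injective v)
    (hsym : ∀ σ : Equiv.Perm (Fin (n+1)), ∃ P : (Fin n → ℂ) ≃ₗ[ℂ] (Fin n → ℂ),
       ∀ i, ∃ c : ℂ, c ≠ 0 ∧ P (v i) = c • v (σ i))
    {f : Fin (finrank ℂ (↥(span ℂ (range v)))) → Fin (n+1)} (hf : Function.Injective f) :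
    LinearIndependent ℂ (v ∘ f) ∧ span ℂ (range (v ∘ f)) = span ℂ (range v) := by
  classical
  obtain ⟨s, hs_sub, hs_span, hs_ind⟩ := exists_linearIndependent ℂ (range v)
  have hsfin : s.Finite := (Set.finite_range v).subset hs_sub
  haveI : Fintype ↑s := hsfin.fintype
  have hranks : finrank ℂ (↥(span ℂ s)) = s.toFinset.card := finrank_span_set_eq_card hs_ind
  have hcard_s : s.toFinset.card = finrank ℂ (↥(span ℂ (range v))) := by
    rw [← hs_span, hranks]
  -- preimage finset
  set t : Finset (Fin (n+1)) := Finset.univ.filter (fun i => v i ∈ s) with ht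
  have himg : v '' ↑t = s := by
    apply Set.Subset.antisymm
    · rintro x ⟨i, hi, rfl⟩
      simpa [ht] using hi
    · intro x hx
      obtain ⟨i, rfl⟩ := hs_sub hx
      exact ⟨i, by simpa [ht] using hx, rfl⟩
  have hcard_t : t.card = finrank ℂ (↥(span ℂ (range v))) := by
    rw [← hcard_s]
    have : t.image v = s.toFinset := by
      ext x; simp [Finset.mem_image, ← himg, Set.mem_image]
    rw [← this, Finset.card_image_of_injective _ hvinj]
  let f₀ : Fin (finrank ℂ (↥(span ℂ (range v)))) → Fin (n+1) := fun j => (t.equivFin.symm (Fin.cast hcard_t.symm j)).1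
  have hf₀ : Function.Injective f₀ := by
    intro a b hab
    have := t.equivFin.symm.injective (Subtype.val_injective hab)
    exact Fin.ext (by simpa using congrArg Fin.val this)
  have hrange₀ : range (v ∘ f₀) = s := by
    rw [← himg]
    ext x
    constructor
    · rintro ⟨j, rfl⟩
      exact ⟨f₀ j, (t.equivFin.symm _).2, rfl⟩
    · rintro ⟨i, hi, rfl⟩
      exact ⟨Fin.cast hcard_t (t.equivFin ⟨i, hi⟩), by simp [f₀, Function.comp]⟩
  have hrk₀ : finrank ℂ (↥(span ℂ (range (v ∘ f₀)))) = finrank ℂ (↥(span ℂ (range v))) := by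
    rw [hrange₀, hs_span]
  have hrk : finrank ℂ (↥(span ℂ (range (v ∘ f)))) = finrank ℂ (↥(span ℂ (range v))) :=
    (rank_invariant hsym hf hf₀).trans hrk₀
  have hle : span ℂ (range (v ∘ f)) ≤ span ℂ (range v) :=
    span_mono (by rw [Set.range_comp]; exact Set.image_subset_range _ _)
  have hspan_eq : span ℂ (range (v ∘ f)) = span ℂ (range v) :=
    eq_of_le_of_finrank_eq hle (by rw [hrk])
  refine ⟨?_, hspan_eq⟩
  rw [linearIndependent_iff_card_eq_finrank_span]
  simpa [Set.finrank] using hrk.symm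


lemma update_injective {ι α : Type*} [DecidableEq ι] {e : ι → α}
    (he : Function.Injective e) (j : ι) {p : α} (hp : p ∉ range e) :
    Function.Injective (Function.update e j p) := by
  intro x y hxy
  by_cases hx : x = j
  · by_cases hy : y = j
    · rw [hx, hy]
    · subst hx
      rw [Function.update_self, Function.update_of_ne hy] at hxy
      exact absurd ⟨y, hxy.symm⟩ hp
  · by_cases hy : y = j
    · subst hy
      rw [Function.update_self, Function.update_of_ne hx] at hxy
      exact absurd ⟨x, hxy⟩ hp
    · rw [Function.update_of_ne hx, Function.update_of_ne hy] at hxy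
      exact he hxy

lemma coeff_unique {ι M : Type*} [Fintype ι] [AddCommGroup M] [Module ℂ M] {u : ι → M}
    (h : LinearIndependent ℂ u) {x y : ι → ℂ}
    (hxy : ∑ i, x i • u i = ∑ i, y i • u i) : ∀ i, x i = y i := by
  have h0 : ∑ i, (x - y) i • u i = 0 := by
    simp only [Pi.sub_apply, sub_smul, Finset.sum_sub_distrib, hxy, sub_self]
  intro i
  have := Fintype.linearIndependent_iff.1 h (x - y) h0 i
  simpa [sub_eq_zero] using this

lemma coeff_ne_zero {ι α M : Type*} [Fintype ι] [DecidableEq ι] [DecidableEq α]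
    [AddCommGroup M] [Module ℂ M]
    (v : α → M) (e : ι → α) (j : ι) (p : α)
    (hind : LinearIndependent ℂ (v ∘ Function.update e j p))
    (a : ι → ℂ) (hsum : ∑ i, a i • v (e i) = v p) (haj : a j = 0) : False := by
  set F := Function.update e j p with hF
  have h0 : ∑ i, (Function.update a j (-1 : ℂ)) i • (v ∘ F) i = 0 := by
    rw [← Finset.add_sum_erase _ _ (Finset.mem_univ j)]
    have h1 : ∀ i ∈ Finset.univ.erase j,
        (Function.update a j (-1 : ℂ)) i • (v ∘ F) i = a i • v (e i) := by
      intro i hi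
      have hij : i ≠ j := Finset.ne_of_mem_erase hi
      simp [Function.update_of_ne hij, hF, Function.comp]
    rw [Finset.sum_congr rfl h1, Finset.sum_erase_eq_sub (Finset.mem_univ j), hsum, haj]
    simp [hF, Function.comp]
  have := Fintype.linearIndependent_iff.1 hind _ h0 j
  simp [Function.update_self] at this

/-- A totally symmetric arrangement of `n+1` distinct lines in `ℂⁿ` is the simplex
arrangement. -/
theorem stmt10 {n : ℕ} (ℓ : Fin (n + 1) → Submodule ℂ (Fin n → ℂ))
    (hline : ∀ i, Module.finrank ℂ (ℓ i) = 1)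
    (hinj : Function.Injective ℓ)
    (hts : ∀ σ : Equiv.Perm (Fin (n + 1)), ∃ P : (Fin n → ℂ) ≃ₗ[ℂ] (Fin n → ℂ),
      ∀ i, (ℓ i).map P.toLinearMap = ℓ (σ i)) :
    ∃ b : Basis (Fin n) ℂ (Fin n → ℂ),
      (∀ i : Fin n, ℓ i.castSucc = Submodule.span ℂ {b i}) ∧
      ℓ (Fin.last n) = Submodule.span ℂ {∑ i, b i} := by
  classical
  -- choose spanning vectors
  have hv : ∀ i, ∃ w : Fin n → ℂ, w ≠ 0 ∧ ℓ i = span ℂ {w} := by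
    intro i
    have h1 : Module.rank ℂ (ℓ i) = 1 := by
      rw [rank_eq_one_iff_finrank_eq_one]; exact hline i
    obtain ⟨w, hw_mem, hw0, hle⟩ := (rank_submodule_eq_one_iff (ℓ i)).1 h1
    exact ⟨w, hw0, le_antisymm hle ((span_singleton_le_iff_mem _ _).2 hw_mem)⟩
  choose v hv0 hvspan using hv
  have hvinj : Function.Injective v := by
    intro i j hij
    exact hinj (by rw [hvspan, hvspan, hij])
  -- scalar form of symmetry
  have hsym : ∀ σ : Equiv.Perm (Fin (n+1)), ∃ P : (Fin n → ℂ) ≃ₗ[ℂ] (Fin n → ℂ),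
      ∀ i, ∃ c : ℂ, c ≠ 0 ∧ P (v i) = c • v (σ i) := by
    intro σ
    obtain ⟨P, hP⟩ := hts σ
    refine ⟨P, fun i => ?_⟩
    have h1 : span ℂ {P (v i)} = span ℂ {v (σ i)} := by
      have h := hP i
      rw [hvspan i, hvspan (σ i), Submodule.map_span] at h
      simpa using h
    have h2 : P (v i) ∈ span ℂ {v (σ i)} := h1 ▸ subset_span rfl
    obtain ⟨c, hc⟩ := Submodule.mem_span_singleton.1 h2
    refine ⟨c, fun h0 => ?_, hc.symm⟩
    apply hv0 i
    have : P (v i) = 0 := by rw [← hc, h0, zero_smul]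
    exact P.injective (by simpa using this)
  -- dimension d of span of everything
  have hdle : finrank ℂ (↥(span ℂ (range v))) ≤ n := by
    have := Submodule.finrank_le (span ℂ (range v))
    simpa using this
  -- pairwise: v j never a multiple of v i
  have hnd : ∀ i j : Fin (n+1), i ≠ j → ∀ c : ℂ, v j ≠ c • v i := by
    intro i j hij c h
    have hc : c ≠ 0 := by rintro rfl; exact hv0 j (by simpa using h)
    have : ℓ j = ℓ i := by
      rw [hvspan, hvspan, h, span_singleton_smul_eq (IsUnit.mk0 c hc)]
    exact hij (hinj this).symm
  rcases eq_or_lt_of_le hdle with hdn | hdn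
  · -- case d = n : build the basis
    have hcast : Function.Injective
        (fun i : Fin (finrank ℂ (↥(span ℂ (range v)))) => Fin.castSucc (Fin.cast hdn i)) := by
      intro x y hxy
      have := Fin.castSucc_injective n hxy
      exact Fin.ext (by simpa using congrArg Fin.val this)
    obtain ⟨hind, hspan⟩ := key_uniform hvinj hsym hcast
    -- independence of v ∘ castSucc
    have hindc : LinearIndependent ℂ (fun i : Fin n => v i.castSucc) := by
      have := hind.comp (Fin.cast hdn.symm) (fun x y hxy => Fin.ext (by simpa using congrArg Fin.val hxy))
      convert this using 1
      funext i; simp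
    -- span is everything
    have hspan_top : span ℂ (range v) = ⊤ := by
      apply Submodule.eq_top_of_finrank_eq
      rw [hdn]; simp
    have hspan_c : span ℂ (range (fun i : Fin n => v i.castSucc)) = ⊤ := by
      rw [← hspan_top, ← hspan]
      congr 1
      ext x
      constructor
      · rintro ⟨i, rfl⟩; exact ⟨Fin.cast hdn.symm i, by simp [Function.comp]⟩
      · rintro ⟨i, rfl⟩; exact ⟨Fin.cast hdn i, by simp [Function.comp]⟩
    -- coefficients of v last
    have hmem : v (Fin.last n) ∈ span ℂ (range (fun i : Fin n => v i.castSucc)) := by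
      rw [hspan_c]; trivial
    obtain ⟨a, hsum⟩ := (mem_span_range_iff_exists_fun ℂ).1 hmem
    have hanz : ∀ j, a j ≠ 0 := by
      intro j haj
      have hpnr : Fin.last n ∉ range (Fin.castSucc : Fin n → Fin (n+1)) := by
        rintro ⟨i, hi⟩
        exact absurd (congrArg Fin.val hi) (by simp [Fin.last]; omega)
      have hupd : Function.Injective (Function.update (Fin.castSucc : Fin n → Fin (n+1)) j (Fin.last n)) :=
        update_injective (Fin.castSucc_injective n) j hpnr
      have hindF : LinearIndependent ℂ
          (v ∘ Function.update (Fin.castSucc : Fin n → Fin (n+1)) j (Fin.last n)) := by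
        have hfinj : Function.Injective
            (fun i : Fin (finrank ℂ (↥(span ℂ (range v)))) =>
              Function.update (Fin.castSucc : Fin n → Fin (n+1)) j (Fin.last n) (Fin.cast hdn i)) := by
          intro x y hxy
          have := hupd hxy
          exact Fin.ext (by simpa using congrArg Fin.val this)
        obtain ⟨hi2, _⟩ := key_uniform hvinj hsym hfinj
        have := hi2.comp (Fin.cast hdn.symm) (fun x y hxy => Fin.ext (by simpa using congrArg Fin.val hxy))
        convert this using 1
        funext i; simp
      exact coeff_ne_zero v (Fin.castSucc : Fin n → Fin (n+1)) j (Fin.last n) hindF a hsum haj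
    -- the basis
    have hindb : LinearIndependent ℂ (fun i : Fin n => a i • v i.castSucc) := by
      have := hindc.units_smul (fun i => Units.mk0 (a i) (hanz i))
      convert this using 1
      funext i; simp [Units.smul_def]
    have hspanb : ⊤ ≤ span ℂ (range (fun i : Fin n => a i • v i.castSucc)) := by
      rw [span_range_eq_of_smul (fun i => ⟨a i, hanz i, rfl⟩), hspan_c]
    let b : Basis (Fin n) ℂ (Fin n → ℂ) := Basis.mk hindb hspanb
    refine ⟨b, fun i => ?_, ?_⟩
    · rw [hvspan]
      have : b i = a i • v i.castSucc := Basis.mk_apply hindb hspanb i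
      rw [this, span_singleton_smul_eq (IsUnit.mk0 _ (hanz i))]
    · rw [hvspan]
      have hb : (∑ i, b i) = v (Fin.last n) := by
        rw [Finset.sum_congr rfl (fun i _ => Basis.mk_apply hindb hspanb i)]
        exact hsum
      rw [hb]
  · -- case d < n : contradiction
    exfalso
    -- D ≥ 2
    have hD2 : 2 ≤ finrank ℂ (↥(span ℂ (range v))) := by
      have hn1 : 1 ≤ n := by omega
      have h01 : (0 : Fin (n+1)) ≠ 1 := by
        intro h
        have := congrArg Fin.val h
        simp [Fin.val_one] at this
        omega
      have hpair : LinearIndependent ℂ ![v 0, v 1] := by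
        rw [LinearIndependent.pair_iff]
        intro s t hst
        by_cases ht : t = 0
        · subst ht
          constructor
          · by_contra hs
            apply hv0 0
            have : s • v 0 = 0 := by simpa using hst
            simpa [hs] using (smul_eq_zero.1 this).resolve_left hs
          · rfl
        · exfalso
          apply hnd 0 1 h01 (-(s/t))
          have hmain : t • v 1 = -(s • v 0) := by
            rw [eq_neg_iff_add_eq_zero, add_comm]; exact hst
          calc v 1 = t⁻¹ • (t • v 1) := by rw [smul_smul, inv_mul_cancel₀ ht, one_smul]
            _ = t⁻¹ • (-(s • v 0)) := by rw [hmain]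
            _ = (-(s/t)) • v 0 := by
                rw [smul_neg, smul_smul, ← neg_smul]
                congr 1
                field_simp
      have h2 : finrank ℂ (↥(span ℂ (range ![v 0, v 1]))) = 2 := by
        rw [finrank_span_eq_card hpair]
        simp
      rw [← h2]
      apply Submodule.finrank_mono
      apply span_mono
      rintro x ⟨i, rfl⟩
      fin_cases i
      · exact ⟨0, rfl⟩
      · exact ⟨1, rfl⟩
    -- indices p, q and embedding
    set D := finrank ℂ (↥(span ℂ (range v))) with hD
    have hp_lt : D < n + 1 := by omega
    have hq_lt : D + 1 < n + 1 := by omega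
    set p : Fin (n+1) := ⟨D, hp_lt⟩ with hp_def
    set q : Fin (n+1) := ⟨D+1, hq_lt⟩ with hq_def
    have hpq : q ≠ p := by
      intro h; have := congrArg Fin.val h; simp [hp_def, hq_def] at this
    set emb0 : Fin D → Fin (n+1) := fun i => ⟨i.1, by omega⟩ with hemb0_def
    have hemb0 : Function.Injective emb0 := by
      intro x y h
      exact Fin.ext (by simpa [hemb0_def] using congrArg Fin.val h)
    have hpnr : p ∉ range emb0 := by
      rintro ⟨i, hi⟩
      have h1 := congrArg Fin.val hi
      have h2 := i.isLt
      simp [hemb0_def, hp_def] at h1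
      omega
    have hqnr : q ∉ range emb0 := by
      rintro ⟨i, hi⟩
      have h1 := congrArg Fin.val hi
      have h2 := i.isLt
      simp [hemb0_def, hq_def] at h1
      omega
    obtain ⟨hu_ind, hu_span⟩ := key_uniform hvinj hsym hemb0
    have hupd_ind : ∀ (j : Fin D) (x : Fin (n+1)), x ∉ range emb0 →
        LinearIndependent ℂ (v ∘ Function.update emb0 j x) :=
      fun j x hx => (key_uniform hvinj hsym (update_injective hemb0 j hx)).1
    -- coefficients a of v p
    have hmemp : v p ∈ span ℂ (range (v ∘ emb0)) := by
      rw [hu_span]; exact subset_span ⟨p, rfl⟩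
    obtain ⟨a, hsuma⟩ := (mem_span_range_iff_exists_fun ℂ).1 hmemp
    have hanz : ∀ j, a j ≠ 0 := fun j haj =>
      coeff_ne_zero v emb0 j p (hupd_ind j p hpnr) a (by simpa [Function.comp] using hsuma) haj
    -- coefficients of v q
    have hmemq : v q ∈ span ℂ (range (v ∘ emb0)) := by
      rw [hu_span]; exact subset_span ⟨q, rfl⟩
    obtain ⟨c', hsumc'⟩ := (mem_span_range_iff_exists_fun ℂ).1 hmemq
    have hc'nz : ∀ j, c' j ≠ 0 := fun j h =>
      coeff_ne_zero v emb0 j q (hupd_ind j q hqnr) c' (by simpa [Function.comp] using hsumc') h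
    set c : Fin D → ℂ := fun k => c' k / a k with hc_def
    have hcnz : ∀ j, c j ≠ 0 := fun j => div_ne_zero (hc'nz j) (hanz j)
    have hsumc : ∑ k, (c k * a k) • (v ∘ emb0) k = v q := by
      rw [← hsumc']
      apply Finset.sum_congr rfl
      intro k _
      congr 1
      rw [hc_def]
      exact div_mul_cancel₀ (c' k) (hanz k)
    -- pairwise distinctness of c
    have hcdist : ∀ i j : Fin D, i ≠ j → c i ≠ c j := by
      intro i j hij hcij
      have hqnr' : q ∉ range (Function.update emb0 i p) := by
        rintro ⟨k, hk⟩
        by_cases hki : k = i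
        · subst hki
          rw [Function.update_self] at hk
          exact hpq hk.symm
        · rw [Function.update_of_ne hki] at hk
          exact hqnr ⟨k, hk⟩
      set F := Function.update (Function.update emb0 i p) j q with hF_def
      have hFinj : Function.Injective F :=
        update_injective (update_injective hemb0 i hpnr) j hqnr'
      have hFind := (key_uniform hvinj hsym hFinj).1
      set g : Fin D → ℂ := fun k => if k = j then 1 else if k = i then -(c i) else (c i - c k) * a k with hg_def
      have hFi : F i = p := by
        rw [hF_def, Function.update_of_ne hij, Function.update_self]
      have hFj : F j = q := by rw [hF_def, Function.update_self]
      have hji : j ∈ Finset.univ.erase i := Finset.mem_erase.2 ⟨hij.symm, Finset.mem_univ j⟩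
      have hsum0 : ∑ k, g k • (v ∘ F) k = 0 := by
        rw [← Finset.add_sum_erase _ _ (Finset.mem_univ i), ← Finset.add_sum_erase _ _ hji]
        have hrest : ∀ k ∈ (Finset.univ.erase i).erase j,
            g k • (v ∘ F) k = ((c i - c k) * a k) • v (emb0 k) := by
          intro k hk
          have hkj : k ≠ j := (Finset.mem_erase.1 hk).1
          have hki : k ≠ i := (Finset.mem_erase.1 (Finset.mem_erase.1 hk).2).1
          simp only [hg_def, hF_def, Function.comp_apply, Function.update_of_ne hkj,
            Function.update_of_ne hki, if_neg hkj, if_neg hki]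
        rw [Finset.sum_congr rfl hrest]
        have hfull : ∑ k, ((c i - c k) * a k) • v (emb0 k) = c i • v p - v q := by
          rw [← hsuma, ← hsumc, Finset.smul_sum, ← Finset.sum_sub_distrib]
          apply Finset.sum_congr rfl
          intro k _
          simp only [Function.comp_apply]
          rw [smul_smul, ← sub_smul]
          ring_nf
        have hterm_i : ((c i - c i) * a i) • v (emb0 i) = 0 := by simp
        have hterm_j : ((c i - c j) * a j) • v (emb0 j) = 0 := by rw [← hcij]; simp
        rw [Finset.sum_erase_eq_sub hji, Finset.sum_erase_eq_sub (Finset.mem_univ i),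
          hfull, hterm_i, hterm_j]
        have hgi : g i = -(c i) := by simp [hg_def, hij]
        have hgj' : g j = 1 := by simp [hg_def]
        simp only [Function.comp_apply, hFi, hFj, hgi, hgj', one_smul, sub_zero]
        rw [neg_smul]
        abel
      have hgj := Fintype.linearIndependent_iff.1 hFind g hsum0 j
      rw [hg_def] at hgj
      simp at hgj
    -- swap p q: squares of c are constant
    obtain ⟨P, hP⟩ := hsym (Equiv.swap p q)
    choose e he0 heP using hP
    have hswap_u : ∀ k : Fin D, P (v (emb0 k)) = e (emb0 k) • v (emb0 k) := by
      intro k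
      have h1 : Equiv.swap p q (emb0 k) = emb0 k :=
        Equiv.swap_apply_of_ne_of_ne (fun h => hpnr ⟨k, h⟩) (fun h => hqnr ⟨k, h⟩)
      rw [heP (emb0 k), h1]
    have hswap_p : P (v p) = e p • v q := by rw [heP p, Equiv.swap_apply_left]
    have hswap_q : P (v q) = e q • v p := by rw [heP q, Equiv.swap_apply_right]
    have h1 : ∀ k, a k * e (emb0 k) = e p * (c k * a k) := by
      apply coeff_unique hu_ind
      have lhs : ∑ k, (a k * e (emb0 k)) • (v ∘ emb0) k = P (v p) := by
        rw [← hsuma, map_sum]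
        apply Finset.sum_congr rfl
        intro k _
        rw [Function.comp_apply, map_smul, hswap_u k, smul_smul]
      have rhs : ∑ k, (e p * (c k * a k)) • (v ∘ emb0) k = P (v p) := by
        rw [hswap_p, ← hsumc, Finset.smul_sum]
        apply Finset.sum_congr rfl
        intro k _
        rw [smul_smul]
      rw [lhs, rhs]
    have h2 : ∀ k, (c k * a k) * e (emb0 k) = e q * a k := by
      apply coeff_unique hu_ind
      have lhs : ∑ k, ((c k * a k) * e (emb0 k)) • (v ∘ emb0) k = P (v q) := by
        rw [← hsumc, map_sum]
        apply Finset.sum_congr rfl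
        intro k _
        rw [Function.comp_apply, map_smul, hswap_u k, smul_smul]
      have rhs : ∑ k, (e q * a k) • (v ∘ emb0) k = P (v q) := by
        rw [hswap_q, ← hsuma, Finset.smul_sum]
        apply Finset.sum_congr rfl
        intro k _
        rw [smul_smul]
      rw [lhs, rhs]
    have hek : ∀ k, e (emb0 k) = e p * c k := by
      intro k
      have h := h1 k
      have hfac : a k * (e (emb0 k) - e p * c k) = 0 := by linear_combination h
      rcases mul_eq_zero.1 hfac with h' | h'
      · exact absurd h' (hanz k)
      · linear_combination h'
    have hsq : ∀ k, e p * c k ^ 2 = e q := by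
      intro k
      have h := h2 k
      rw [hek k] at h
      have hfac : a k * (e p * c k ^ 2 - e q) = 0 := by linear_combination h
      rcases mul_eq_zero.1 hfac with h' | h'
      · exact absurd h' (hanz k)
      · linear_combination h'
    have hep : e p ≠ 0 := he0 p
    -- D = 2
    have hDeq : D = 2 := by
      by_contra hne
      have h3 : 3 ≤ D := by omega
      set k0 : Fin D := ⟨0, by omega⟩ with hk0
      set k1 : Fin D := ⟨1, by omega⟩ with hk1
      set k2 : Fin D := ⟨2, by omega⟩ with hk2
      have hne01 : k0 ≠ k1 := fun h => by simpa [hk0, hk1] using congrArg Fin.val h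
      have hne02 : k0 ≠ k2 := fun h => by simpa [hk0, hk2] using congrArg Fin.val h
      have hne12 : k1 ≠ k2 := fun h => by simpa [hk1, hk2] using congrArg Fin.val h
      have hsq01 : c k1 ^ 2 = c k0 ^ 2 := by
        have e1 := hsq k1; have e0 := hsq k0
        have := e1.trans e0.symm
        exact mul_left_cancel₀ hep this
      have hsq02 : c k2 ^ 2 = c k0 ^ 2 := by
        have e2 := hsq k2; have e0 := hsq k0
        have := e2.trans e0.symm
        exact mul_left_cancel₀ hep this
      have hc10 : c k1 = -c k0 := by
        have hfac : (c k1 - c k0) * (c k1 + c k0) = 0 := by linear_combination hsq01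
        rcases mul_eq_zero.1 hfac with h | h
        · exact absurd (sub_eq_zero.1 h) (hcdist k1 k0 hne01.symm)
        · linear_combination h
      have hc20 : c k2 = -c k0 := by
        have hfac : (c k2 - c k0) * (c k2 + c k0) = 0 := by linear_combination hsq02
        rcases mul_eq_zero.1 hfac with h | h
        · exact absurd (sub_eq_zero.1 h) (hcdist k2 k0 hne02.symm)
        · linear_combination h
      exact hcdist k1 k2 hne12 (hc10.trans hc20.symm)
    -- final contradiction in dimension 2
    set k0 : Fin D := ⟨0, by omega⟩ with hk0
    set k1 : Fin D := ⟨1, by omega⟩ with hk1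
    have hkne : k1 ≠ k0 := fun h => by simpa [hk0, hk1] using congrArg Fin.val h
    have herase : (Finset.univ : Finset (Fin D)).erase k0 = {k1} := by
      ext x
      simp only [Finset.mem_erase, Finset.mem_univ, and_true, Finset.mem_singleton]
      constructor
      · intro hx
        have h1 := x.isLt
        have h2 : x.1 ≠ 0 := fun h => hx (Fin.ext (by simpa [hk0] using h))
        exact Fin.ext (by simp [hk1]; omega)
      · rintro rfl; exact hkne
    have hsum2 : ∀ f : Fin D → (Fin n → ℂ), ∑ k, f k = f k0 + f k1 := by
      intro f
      rw [← Finset.add_sum_erase _ _ (Finset.mem_univ k0), herase, Finset.sum_singleton]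
    have pair_unique : ∀ x0 x1 y0 y1 : ℂ,
        x0 • v (emb0 k0) + x1 • v (emb0 k1) = y0 • v (emb0 k0) + y1 • v (emb0 k1) →
        x0 = y0 ∧ x1 = y1 := by
      intro x0 x1 y0 y1 hxy
      have hx := coeff_unique hu_ind (x := fun m => if m = k0 then x0 else x1)
        (y := fun m => if m = k0 then y0 else y1)
        (by rw [hsum2, hsum2]; simpa [hkne] using hxy)
      exact ⟨by simpa using hx k0, by simpa [hkne] using hx k1⟩
    have hsump : v p = a k0 • v (emb0 k0) + a k1 • v (emb0 k1) := by
      rw [← hsuma, hsum2]; rfl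
    have hsumq : v q = (c k0 * a k0) • v (emb0 k0) + (c k1 * a k1) • v (emb0 k1) := by
      rw [← hsumc, hsum2]; rfl
    have hc10 : c k1 = -c k0 := by
      have hsq01 : c k1 ^ 2 = c k0 ^ 2 := by
        have e1 := hsq k1; have e0 := hsq k0
        exact mul_left_cancel₀ hep (e1.trans e0.symm)
      have hfac : (c k1 - c k0) * (c k1 + c k0) = 0 := by linear_combination hsq01
      rcases mul_eq_zero.1 hfac with h | h
      · exact absurd (sub_eq_zero.1 h) (hcdist k1 k0 hkne)
      · linear_combination h
    -- second swap
    obtain ⟨Q, hQ⟩ := hsym (Equiv.swap (emb0 k0) p)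
    choose e' he'0 he'P using hQ
    have hne_u1 : emb0 k1 ≠ emb0 k0 := fun h => hkne (hemb0 h)
    have hne_u1p : emb0 k1 ≠ p := fun h => hpnr ⟨k1, h⟩
    have hQu0 : Q (v (emb0 k0)) = e' (emb0 k0) • v p := by
      rw [he'P (emb0 k0), Equiv.swap_apply_left]
    have hQu1 : Q (v (emb0 k1)) = e' (emb0 k1) • v (emb0 k1) := by
      rw [he'P (emb0 k1), Equiv.swap_apply_of_ne_of_ne hne_u1 hne_u1p]
    have hQp : Q (v p) = e' p • v (emb0 k0) := by
      rw [he'P p, Equiv.swap_apply_right]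
    have hQq : Q (v q) = e' q • v q := by
      have hq1 : q ≠ emb0 k0 := fun h => hqnr ⟨k0, h.symm⟩
      rw [he'P q, Equiv.swap_apply_of_ne_of_ne hq1 hpq]
    -- abbreviations
    set A0 := a k0 with hA0
    set A1 := a k1 with hA1
    set C0 := c k0 with hC0
    set E0 := e' (emb0 k0) with hE0
    set E1 := e' (emb0 k1) with hE1
    -- apply Q to hsump
    have hQA : Q (v p) = (A0 * E0 * A0) • v (emb0 k0) + (A0 * E0 * A1 + A1 * E1) • v (emb0 k1) := by
      calc Q (v p) = A0 • Q (v (emb0 k0)) + A1 • Q (v (emb0 k1)) := by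
            rw [hsump]; simp [map_add, map_smul]
        _ = A0 • (E0 • v p) + A1 • (E1 • v (emb0 k1)) := by rw [hQu0, hQu1]
        _ = (A0 * E0 * A0) • v (emb0 k0) + (A0 * E0 * A1 + A1 * E1) • v (emb0 k1) := by
            rw [hsump]
            module
    have hQA' : (e' p) • v (emb0 k0) + (0:ℂ) • v (emb0 k1)
        = (A0 * E0 * A0) • v (emb0 k0) + (A0 * E0 * A1 + A1 * E1) • v (emb0 k1) := by
      rw [zero_smul, add_zero, ← hQp, hQA]
    obtain ⟨hA1eq, hA2eq⟩ := pair_unique _ _ _ _ hQA'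
    -- apply Q to hsumq
    have hQB : Q (v q) = (C0 * A0 * E0 * A0) • v (emb0 k0)
        + (C0 * A0 * E0 * A1 + (c k1 * A1) * E1) • v (emb0 k1) := by
      calc Q (v q) = (C0 * A0) • Q (v (emb0 k0)) + (c k1 * A1) • Q (v (emb0 k1)) := by
            rw [hsumq]; simp [map_add, map_smul]
        _ = (C0 * A0) • (E0 • v p) + (c k1 * A1) • (E1 • v (emb0 k1)) := by rw [hQu0, hQu1]
        _ = (C0 * A0 * E0 * A0) • v (emb0 k0)
            + (C0 * A0 * E0 * A1 + (c k1 * A1) * E1) • v (emb0 k1) := by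
            rw [hsump]
            module
    have hQB' : (e' q * (C0 * A0)) • v (emb0 k0) + (e' q * (c k1 * A1)) • v (emb0 k1)
        = (C0 * A0 * E0 * A0) • v (emb0 k0)
          + (C0 * A0 * E0 * A1 + (c k1 * A1) * E1) • v (emb0 k1) := by
      calc (e' q * (C0 * A0)) • v (emb0 k0) + (e' q * (c k1 * A1)) • v (emb0 k1)
          = e' q • ((C0 * A0) • v (emb0 k0) + (c k1 * A1) • v (emb0 k1)) := by module
        _ = e' q • v q := by rw [← hsumq]
        _ = Q (v q) := hQq.symm
        _ = _ := hQB
    obtain ⟨hB1eq, hB2eq⟩ := pair_unique _ _ _ _ hQB'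
    -- scalar contradiction
    have hA0nz : A0 ≠ 0 := hanz k0
    have hA1nz : A1 ≠ 0 := hanz k1
    have hC0nz : C0 ≠ 0 := hcnz k0
    have hE0nz : E0 ≠ 0 := he'0 (emb0 k0)
    have he'q : e' q = A0 * E0 := by
      have hfac : (C0 * A0) * (e' q - A0 * E0) = 0 := by linear_combination hB1eq
      rcases mul_eq_zero.1 hfac with h | h
      · rcases mul_eq_zero.1 h with h' | h'
        · exact absurd h' hC0nz
        · exact absurd h' hA0nz
      · linear_combination h
    have hE1eq : E1 = -(A0 * E0) := by
      have h := hA2eq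
      have : A1 * (A0 * E0 + E1) = 0 := by linear_combination h.symm
      rcases mul_eq_zero.1 this with h' | h'
      · exact absurd h' hA1nz
      · linear_combination h'
    have hX : C0 * A0 * E0 * A1 = 0 := by
      have h := hB2eq
      rw [hc10, he'q, hE1eq] at h
      linear_combination -h / 3
    rcases mul_eq_zero.1 hX with h | h
    · rcases mul_eq_zero.1 h with h' | h'
      · rcases mul_eq_zero.1 h' with h'' | h''
        · exact hC0nz h''
        · exact hA0nz h''
      · exact hE0nz h'
    · exact hA1nz h
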